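/- Let n ≥ 3 and let Z, W ∈ 𝕄(n). The segment σ(t) = (1−t)Z + tW, t ∈ [0,1], is contained in 𝕄(n) if and only if W ∈ (ℝ^{n−1}_Z ∪ ℂ*_Z) ∖ {rZ : r ∈ ℝ, r ≤ 0}. -/

import Mathlib

open Complex

noncomputable section

/-- The set of `n`-segments in `ℂ^n`. -/
def Lset (n : ℕ) : Set (Fin n → ℂ) :=
  {Z | (¬ ∃ b : ℂ, ∀ j, Z j = b) ∧ ∃ (a b : ℂ) (X : Fin n → ℝ), ∀ j, Z j = a * (X j) + b}

/-- `𝕄(n)` (with `n = m + 3`): the `n`-segments whose first vertex is `0`. -/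
def Mset (m : ℕ) : Set (Fin (m + 3) → ℂ) :=
  {Z | Z ∈ Lset (m + 3) ∧ Z 0 = 0}

/-- `ℝ^{n-1}_Z`: writing `Z = z·C` with `z ∈ ℂ*` and `C` real, `C₁ = 0`, `C ≠ 0`, this is
`{z·X : X ∈ ℝ^n, X₁ = 0, X ≠ 0}` (independent of the choice of such `z`). -/
def Rslice (m : ℕ) (Z : Fin (m + 3) → ℂ) : Set (Fin (m + 3) → ℂ) :=
  {W | ∃ (z : ℂ) (C : Fin (m + 3) → ℝ), z ≠ 0 ∧ C 0 = 0 ∧ C ≠ 0 ∧ (∀ j, Z j = z * C j) ∧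
        ∃ X : Fin (m + 3) → ℝ, X 0 = 0 ∧ X ≠ 0 ∧ ∀ j, W j = z * X j}

/-- `ℂ*_Z = {λ·Z : λ ∈ ℂ∖{0}}`. -/
def Cstar (m : ℕ) (Z : Fin (m + 3) → ℂ) : Set (Fin (m + 3) → ℂ) :=
  {W | ∃ l : ℂ, l ≠ 0 ∧ ∀ j, W j = l * Z j}

/-- `{r·Z : r ∈ ℝ, r ≤ 0}`. -/
def negRay (m : ℕ) (Z : Fin (m + 3) → ℂ) : Set (Fin (m + 3) → ℂ) :=
  {W | ∃ r : ℝ, r ≤ 0 ∧ ∀ j, W j = (r : ℂ) * Z j}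

/-- A vector of the form `u·Y` with `u ≠ 0`, `Y` real, `Y 0 = 0`, `Y ≠ 0` is in `𝕄`. -/
lemma mset_of (m : ℕ) (V : Fin (m + 3) → ℂ) (u : ℂ) (Y : Fin (m + 3) → ℝ)
    (hu : u ≠ 0) (hY0 : Y 0 = 0) (hY : Y ≠ 0) (h : ∀ j, V j = u * Y j) :
    V ∈ Mset m := by
  have hV0 : V 0 = 0 := by rw [h 0, hY0]; simp
  refine ⟨⟨?_, u, 0, Y, fun j => by rw [h j]; ring⟩, hV0⟩
  rintro ⟨b, hb⟩
  have hb0 : b = 0 := by rw [← hb 0, hV0]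
  apply hY
  funext j
  have h1 : u * (Y j : ℂ) = 0 := by rw [← h j, hb j, hb0]
  have h2 : (Y j : ℂ) = 0 := by
    rcases mul_eq_zero.mp h1 with h' | h'
    · exact absurd h' hu
    · exact h'
  exact_mod_cast h2

/-- Every element of `𝕄` has a representation `z·C`, `z ≠ 0`, `C` real, `C 0 = 0`, `C ≠ 0`. -/
lemma mset_repr (m : ℕ) (Z : Fin (m + 3) → ℂ) (hZ : Z ∈ Mset m) :
    ∃ (z : ℂ) (C : Fin (m + 3) → ℝ), z ≠ 0 ∧ C 0 = 0 ∧ C ≠ 0 ∧ ∀ j, Z j = z * C j := by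
  obtain ⟨⟨hnc, a, b, X, hX⟩, h0⟩ := hZ
  have hab : a * (X 0 : ℂ) + b = 0 := by rw [← hX 0, h0]
  have ha : a ≠ 0 := by
    rintro rfl
    exact hnc ⟨b, fun j => by rw [hX j]; ring⟩
  refine ⟨a, fun j => X j - X 0, ha, by simp, ?_, ?_⟩
  · intro hC
    apply hnc
    refine ⟨0, fun j => ?_⟩
    have hj : X j - X 0 = 0 := congrFun hC j
    have hXj : (X j : ℝ) = X 0 := by linarith
    rw [hX j, hXj]
    linear_combination hab
  · intro j
    have : ((X j - X 0 : ℝ) : ℂ) = (X j : ℂ) - (X 0 : ℂ) := by push_cast; ring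
    rw [hX j, this]
    linear_combination hab

/-- Linear independence step: if `aC + bD = uE` with `a,b,u ≠ 0`, `C ≠ 0` real vectors,
then either `D` is a real multiple of `C` or `b/a` is real. -/
lemma indep_case (m : ℕ) (C D E : Fin (m + 3) → ℝ) (a b u : ℂ)
    (ha : a ≠ 0) (hb : b ≠ 0) (hu : u ≠ 0) (hC : C ≠ 0)
    (h : ∀ j, a * C j + b * D j = u * E j) :
    (∃ s : ℝ, ∀ j, D j = s * C j) ∨ (∃ s : ℝ, b = s * a) := by
  by_cases hdep : ∃ s : ℝ, ∀ j, D j = s * C j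
  · exact Or.inl hdep
  right
  have hE : ∀ j, (E j : ℂ) = (a / u) * C j + (b / u) * D j := by
    intro j
    field_simp
    linear_combination -(h j)
  have him : ∀ j, (a / u).im * C j + (b / u).im * D j = 0 := by
    intro j
    have := congrArg Complex.im (hE j)
    simpa using this.symm
  have hbim : (b / u).im = 0 := by
    by_contra hne
    apply hdep
    refine ⟨-(a / u).im / (b / u).im, fun j => ?_⟩
    have := him j
    field_simp
    linarith
  have haim : (a / u).im = 0 := by
    obtain ⟨j, hj⟩ := Function.ne_iff.mp hC
    have := him j
    rw [hbim] at this
    have hCj : C j ≠ 0 := by simpa using hj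
    have : (a / u).im * C j = 0 := by linarith
    rcases mul_eq_zero.mp this with h' | h'
    · exact h'
    · exact absurd h' hCj
  set α := (a / u).re with hα
  set β := (b / u).re with hβ
  have hau : a = (α : ℂ) * u := by
    have h1 : a / u = (α : ℂ) := Complex.ext (by simp [hα]) (by simp [haim])
    field_simp at h1
    linear_combination h1
  have hbu : b = (β : ℂ) * u := by
    have h1 : b / u = (β : ℂ) := Complex.ext (by simp [hβ]) (by simp [hbim])
    field_simp at h1
    linear_combination h1
  have hα0 : α ≠ 0 := by
    intro h0
    apply ha
    rw [hau, h0]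
    simp
  refine ⟨β / α, ?_⟩
  rw [hau, hbu]
  have : ((β / α : ℝ) : ℂ) = (β : ℂ) / (α : ℂ) := by push_cast; ring
  rw [this]
  have hαC : (α : ℂ) ≠ 0 := by exact_mod_cast hα0
  field_simp

/-- For `Z, W ∈ 𝕄(n)` (`n = m + 3 ≥ 3`), the segment
`σ(t) = (1-t)Z + tW`, `t ∈ [0,1]`, is contained in `𝕄(n)` if and only if
`W ∈ (ℝ^{n-1}_Z ∪ ℂ*_Z) \ {rZ : r ∈ ℝ, r ≤ 0}`. -/
theorem segment_mem_Mset_iff (m : ℕ) (Z W : Fin (m + 3) → ℂ)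
    (hZ : Z ∈ Mset m) (hW : W ∈ Mset m) :
    (∀ t ∈ Set.Icc (0 : ℝ) 1,
        (fun j => (1 - (t : ℂ)) * Z j + (t : ℂ) * W j) ∈ Mset m) ↔
      W ∈ (Rslice m Z ∪ Cstar m Z) \ negRay m Z := by
  constructor
  · intro hseg
    obtain ⟨z, C, hz, hC0, hCne, hZC⟩ := mset_repr m Z hZ
    obtain ⟨w, D, hw, hD0, hDne, hWD⟩ := mset_repr m W hW
    -- W is not on the nonpositive ray through Z
    have hneg : W ∉ negRay m Z := by
      rintro ⟨r, hr, hWr⟩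
      rcases lt_or_eq_of_le hr with hr' | hr'
      · set t : ℝ := 1 / (1 - r) with ht
        have h1r : (0 : ℝ) < 1 - r := by linarith
        have ht0 : (0 : ℝ) ≤ t := by positivity
        have ht1 : t ≤ 1 := by rw [ht, div_le_one h1r]; linarith
        have hmem := hseg t ⟨ht0, ht1⟩
        have hreal : 1 - t + t * r = 0 := by
          rw [ht]; field_simp; ring
        have hc : (1 : ℂ) - (t : ℂ) + (t : ℂ) * (r : ℂ) = 0 := by exact_mod_cast hreal
        refine hmem.1.1 ⟨0, fun j => ?_⟩
        show (1 - (t : ℂ)) * Z j + (t : ℂ) * W j = 0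
        rw [hWr j]
        linear_combination Z j * hc
      · subst hr'
        refine hW.1.1 ⟨0, fun j => ?_⟩
        rw [hWr j]; simp
    have h2 := hseg (1 / 2) ⟨by norm_num, by norm_num⟩
    obtain ⟨u, E, hu, hE0, hEne, hσ⟩ := mset_repr m _ h2
    have hkey : ∀ j, (z / 2) * C j + (w / 2) * D j = u * E j := by
      intro j
      have h' := hσ j
      rw [hZC j, hWD j] at h'
      push_cast at h' ⊢
      linear_combination h'
    have hz2 : z / 2 ≠ 0 := by simpa using hz
    have hw2 : w / 2 ≠ 0 := by simpa using hw
    rcases indep_case m C D E (z / 2) (w / 2) u hz2 hw2 hu hCne hkey with ⟨s, hs⟩ | ⟨s, hs⟩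
    · -- D = s·C : W ∈ ℂ*_Z
      have hs0 : s ≠ 0 := by
        rintro rfl
        apply hDne
        funext j
        simpa using hs j
      refine ⟨Or.inr ⟨w * s / z, ?_, ?_⟩, hneg⟩
      · apply div_ne_zero _ hz
        exact mul_ne_zero hw (by exact_mod_cast hs0)
      · intro j
        rw [hWD j, hZC j, hs j]
        push_cast
        field_simp
    · -- w/2 = s·(z/2) : W ∈ ℝ^{n-1}_Z
      have hsz : w = (s : ℂ) * z := by linear_combination 2 * hs
      have hs0 : s ≠ 0 := by
        rintro rfl
        simp at hsz
        exact hw hsz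
      refine ⟨Or.inl ⟨z, C, hz, hC0, hCne, hZC, fun j => s * D j, by simp [hD0], ?_, ?_⟩, hneg⟩
      · intro h0
        apply hDne
        funext j
        have hj : s * D j = 0 := congrFun h0 j
        have := mul_eq_zero.mp hj
        rcases this with h' | h'
        · exact absurd h' hs0
        · simpa using h'
      · intro j
        rw [hWD j, hsz]
        push_cast
        ring
  · rintro ⟨hmem, hneg⟩ t ⟨ht0, ht1⟩
    rcases hmem with ⟨z, C, hz, hC0, hCne, hZC, X, hX0, hXne, hWX⟩ | ⟨l, hl, hWl⟩
    · -- Rslice case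
      set Y : Fin (m + 3) → ℝ := fun j => (1 - t) * C j + t * X j with hY
      have hYj : ∀ j, (1 - (t : ℂ)) * Z j + (t : ℂ) * W j = z * Y j := by
        intro j
        rw [hZC j, hWX j]
        simp only [hY]
        push_cast
        ring
      refine mset_of m _ z Y hz (by simp [hY, hC0, hX0]) ?_ hYj
      intro hY0
      by_cases ht : t = 0
      · subst ht
        apply hCne
        funext j
        have := congrFun hY0 j
        simpa [hY] using this
      · have htpos : 0 < t := lt_of_le_of_ne ht0 (Ne.symm ht)
        apply hneg
        refine ⟨-(1 - t) / t, ?_, fun j => ?_⟩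
        · apply div_nonpos_of_nonpos_of_nonneg <;> linarith
        · have hYj0 : (1 - t) * C j + t * X j = 0 := congrFun hY0 j
          have hXj : X j = -(1 - t) / t * C j := by
            field_simp
            linarith
          rw [hWX j, hXj, hZC j]
          push_cast
          ring
    · -- Cstar case
      obtain ⟨z, C, hz, hC0, hCne, hZC⟩ := mset_repr m Z hZ
      have hμ : (1 - (t : ℂ)) + (t : ℂ) * l ≠ 0 := by
        intro h0
        by_cases ht : t = 0
        · subst ht; simp at h0
        · have htpos : 0 < t := lt_of_le_of_ne ht0 (Ne.symm ht)
          apply hneg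
          have htC : (t : ℂ) ≠ 0 := by exact_mod_cast ht
          have hl' : l = (((t - 1) / t : ℝ) : ℂ) := by
            have h1 : (t : ℂ) * l = (t : ℂ) - 1 := by linear_combination h0
            push_cast
            rw [eq_div_iff htC]
            linear_combination h1
          refine ⟨(t - 1) / t, ?_, fun j => ?_⟩
          · apply div_nonpos_of_nonpos_of_nonneg <;> linarith
          · rw [hWl j, hl']
      refine mset_of m _ (((1 - (t : ℂ)) + (t : ℂ) * l) * z) C (mul_ne_zero hμ hz) hC0 hCne ?_
      intro j
      rw [hWl j, hZC j]
      ring
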